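/- The family wIFS¹ of attractors of weak iterated function systems on [0,1] is an analytic subset of the hyperspace K([0,1]). -/

import Mathlib

/-- A weak contraction: `d(f(x),f(y)) < d(x,y)` for all distinct `x, y`. -/
def IsWeakContraction {X : Type*} [MetricSpace X] (f : X → X) : Prop :=
  ∀ x y, x ≠ y → dist (f x) (f y) < dist x y

/-- The family of attractors of weak iterated function systems on `[0,1]`, as a
subset of the hyperspace `K([0,1])` of nonempty compact subsets of `[0,1]`. -/
def wIFS1 : Set (TopologicalSpace.NonemptyCompacts (Set.Icc (0 : ℝ) 1)) :=
  {A | ∃ (k : ℕ) (s : Fin (k + 1) → Set.Icc (0 : ℝ) 1 → Set.Icc (0 : ℝ) 1),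
      (∀ i, IsWeakContraction (s i)) ∧
      (A : Set (Set.Icc (0 : ℝ) 1)) = ⋃ i, s i '' (A : Set (Set.Icc (0 : ℝ) 1))}

/-!
A weak contraction is 1-Lipschitz, and among the 1-Lipschitz self-maps of a compact metric space
the weak contractions form a `G_δ` set: `f` is a weak contraction iff `d(f x, f y) < d(x, y)` on
each compact set `{1/(n+1) ≤ d(x, y)}`, an open condition on `f`. On tuples of 1-Lipschitz maps
the Hutchinson operator `A ↦ ⋃ i, f i '' A` is Lipschitz in the system and the set, so the pairs
(system of weak contractions, attractor) form a `G_δ` subset of a Polish space. The attractors are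
its projection, hence analytic.
-/

open TopologicalSpace Metric Set

lemma IsWeakContraction.lipschitzWith {X : Type*} [MetricSpace X] {f : X → X}
    (hf : IsWeakContraction f) : LipschitzWith 1 f :=
  LipschitzWith.of_dist_le_mul fun x y => by
    rcases eq_or_ne x y with rfl | hne
    · simp
    · simpa using (hf x y hne).le

lemma IsGδ.analyticSet {α : Type*} [TopologicalSpace α] [PolishSpace α] {s : Set α}
    (hs : IsGδ s) : MeasureTheory.AnalyticSet s := by
  borelize α
  exact hs.measurableSet.analyticSet

lemma TopologicalSpace.NonemptyCompacts.exists_dist_le_dist {X : Type*} [MetricSpace X]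
    {A B : NonemptyCompacts X} {a : X} (ha : a ∈ A) : ∃ b ∈ B, dist a b ≤ dist A B := by
  obtain ⟨b, hb, hab⟩ := B.isCompact.exists_infDist_eq_dist B.nonempty a
  refine ⟨b, hb, hab ▸ infDist_le_hausdorffDist_of_mem ha ?_⟩
  exact hausdorffEDist_ne_top_of_nonempty_of_bounded A.nonempty B.nonempty
    A.isCompact.isBounded B.isCompact.isBounded

section WeakContractions

variable {X : Type*} [MetricSpace X]

lemma isOpen_setOf_forall_dist_lt [LocallyCompactSpace X] {K : Set (X × X)} (hK : IsCompact K) :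
    IsOpen {f : C(X, X) | ∀ p ∈ K, dist (f p.1) (f p.2) < dist p.1 p.2} := by
  refine isOpen_iff_mem_nhds.2 fun f hf =>
    hK.eventually_forall_of_forall_eventually fun p hp => ?_
  have hU : IsOpen {z : C(X, X) × (X × X) | dist (z.1 z.2.1) (z.1 z.2.2) < dist z.2.1 z.2.2} :=
    isOpen_lt (by fun_prop) (by fun_prop)
  exact hU.mem_nhds (hf p hp)

lemma isGδ_setOf_isWeakContraction [CompactSpace X] :
    IsGδ {f : C(X, X) | IsWeakContraction f} := by
  have hK (n : ℕ) : IsCompact {p : X × X | 1 / (n + 1 : ℝ) ≤ dist p.1 p.2} :=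
    (isClosed_le continuous_const continuous_dist).isCompact
  convert IsGδ.iInter_of_isOpen fun n => isOpen_setOf_forall_dist_lt (hK n)
  ext f
  simp only [IsWeakContraction, mem_ofPred_eq, mem_iInter, Prod.forall]
  constructor
  · intro hf n x y hxy
    exact hf x y (dist_pos.1 (lt_of_lt_of_le (by positivity) hxy))
  · intro hf x y hne
    obtain ⟨n, hn⟩ := exists_nat_one_div_lt (dist_pos.2 hne)
    exact hf n x y hn.le

end WeakContractions

section Hutchinson

variable {X ι : Type*} [MetricSpace X]

def hutchinson [Finite ι] [Nonempty ι] (f : ι → C(X, X)) (A : NonemptyCompacts X) :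
    NonemptyCompacts X :=
  ⟨⟨⋃ i, f i '' A, isCompact_iUnion fun i => A.isCompact.image (f i).continuous⟩,
    nonempty_iUnion.2 ⟨Classical.arbitrary ι, A.nonempty.image _⟩⟩

variable [CompactSpace X]

lemma dist_apply_le_of_lipschitzWith {K : NNReal} {f : C(X, X)} (hf : LipschitzWith K f)
    (g : C(X, X)) (a b : X) : dist (f a) (g b) ≤ K * dist a b + dist f g :=
  calc dist (f a) (g b) ≤ dist (f a) (f b) + dist (f b) (g b) := dist_triangle _ _ _
    _ ≤ K * dist a b + dist f g :=
      add_le_add (hf.dist_le_mul a b) (ContinuousMap.dist_apply_le_dist b)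

lemma dist_hutchinson_le [Fintype ι] [Nonempty ι] {K : NNReal} {f : ι → C(X, X)}
    (hf : ∀ i, LipschitzWith K (f i)) (g : ι → C(X, X)) (A B : NonemptyCompacts X) :
    dist (hutchinson f A) (hutchinson g B) ≤ K * dist A B + dist f g := by
  have hfg (i : ι) : K * dist A B + dist (f i) (g i) ≤ K * dist A B + dist f g := by
    gcongr; exact dist_le_pi_dist f g i
  refine hausdorffDist_le_of_mem_dist (by positivity) ?_ ?_
  · rintro _ ⟨_, ⟨i, rfl⟩, a, ha, rfl⟩
    obtain ⟨b, hb, hab⟩ := NonemptyCompacts.exists_dist_le_dist (B := B) ha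
    refine ⟨g i b, mem_iUnion.2 ⟨i, mem_image_of_mem _ hb⟩, ?_⟩
    calc dist (f i a) (g i b) ≤ K * dist a b + dist (f i) (g i) :=
          dist_apply_le_of_lipschitzWith (hf i) _ a b
      _ ≤ K * dist A B + dist (f i) (g i) := by gcongr
      _ ≤ K * dist A B + dist f g := hfg i
  · rintro _ ⟨_, ⟨i, rfl⟩, b, hb, rfl⟩
    obtain ⟨a, ha, hba⟩ := NonemptyCompacts.exists_dist_le_dist (B := A) hb
    refine ⟨f i a, mem_iUnion.2 ⟨i, mem_image_of_mem _ ha⟩, ?_⟩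
    calc dist (g i b) (f i a) ≤ K * dist a b + dist (f i) (g i) := by
          rw [dist_comm]; exact dist_apply_le_of_lipschitzWith (hf i) _ a b
      _ ≤ K * dist A B + dist (f i) (g i) := by rw [dist_comm a, dist_comm A]; gcongr
      _ ≤ K * dist A B + dist f g := hfg i

end Hutchinson

section Attractors

variable (X ι : Type*) [MetricSpace X]

def nonexpansiveMaps : Set C(X, X) := {f | LipschitzWith 1 f}

lemma isClosed_nonexpansiveMaps : IsClosed (nonexpansiveMaps X) :=
  (isClosed_setOfPred_lipschitzWith 1).preimage continuous_coeFun

instance [CompactSpace X] : PolishSpace (nonexpansiveMaps X) :=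
  (isClosed_nonexpansiveMaps X).polishSpace

def weakIFSAttractors : Set (NonemptyCompacts X) :=
  {A | ∃ f : ι → X → X, (∀ i, IsWeakContraction (f i)) ∧ (A : Set X) = ⋃ i, f i '' A}

variable [CompactSpace X] [Fintype ι] [Nonempty ι]

lemma lipschitzWith_hutchinson_nonexpansiveMaps :
    LipschitzWith 2 fun p : (ι → nonexpansiveMaps X) × NonemptyCompacts X =>
      hutchinson (fun i => (p.1 i : C(X, X))) p.2 := by
  refine LipschitzWith.of_dist_le_mul fun p q => ?_
  have hmaps : dist (fun i => (p.1 i : C(X, X))) (fun i => (q.1 i : C(X, X))) ≤ dist p q :=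
    (dist_pi_le_iff dist_nonneg).2 fun i =>
      (dist_le_pi_dist p.1 q.1 i).trans (by rw [Prod.dist_eq]; exact le_max_left _ _)
  have hsets : dist p.2 q.2 ≤ dist p q := by rw [Prod.dist_eq]; exact le_max_right _ _
  have hhut := dist_hutchinson_le (fun i => (p.1 i).2) (fun i => (q.1 i : C(X, X))) p.2 q.2
  push_cast at hhut ⊢
  linarith

theorem analyticSet_weakIFSAttractors : MeasureTheory.AnalyticSet (weakIFSAttractors X ι) := by
  set D : Set ((ι → nonexpansiveMaps X) × NonemptyCompacts X) :=
    (⋂ i, (fun p => (p.1 i : C(X, X))) ⁻¹' {f | IsWeakContraction f}) ∩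
      {p | hutchinson (fun i => (p.1 i : C(X, X))) p.2 = p.2}
  have hD : IsGδ D :=
    (IsGδ.iInter fun i => isGδ_setOf_isWeakContraction.preimage (by fun_prop)).inter
      (isClosed_eq (lipschitzWith_hutchinson_nonexpansiveMaps X ι).continuous
        continuous_snd).isGδ
  suffices weakIFSAttractors X ι = Prod.snd '' D from
    this ▸ hD.analyticSet.image_of_continuous continuous_snd
  ext A
  constructor
  · rintro ⟨f, hf, hA⟩
    let s (i : ι) : nonexpansiveMaps X :=
      ⟨⟨f i, (hf i).lipschitzWith.continuous⟩, (hf i).lipschitzWith⟩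
    exact ⟨(s, A), ⟨mem_iInter.2 hf, NonemptyCompacts.ext hA.symm⟩, rfl⟩
  · rintro ⟨p, ⟨hf, hA⟩, rfl⟩
    exact ⟨fun i => p.1 i, mem_iInter.1 hf, congrArg SetLike.coe hA.symm⟩

end Attractors

theorem stmt11 : MeasureTheory.AnalyticSet wIFS1 := by
  have hunion : wIFS1 = ⋃ k : ℕ, weakIFSAttractors (Set.Icc (0 : ℝ) 1) (Fin (k + 1)) := by
    ext A
    simp only [wIFS1, weakIFSAttractors, mem_ofPred_eq, mem_iUnion]
  exact hunion ▸ MeasureTheory.AnalyticSet.iUnion fun k => analyticSet_weakIFSAttractors _ _
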